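/- arXiv:math/0301266 — 3 statements merged into one kernel-verified Lean document; each statement's English description precedes it below -/
import Mathlib

section
/- Let A be a d×n integer matrix with ker(A) ∩ ℕ^n = {0}, and let c ∈ ℚ^n. If every non-optimal point u ∈ ℕ^n of the family of integer programs min{c·v : Av = Au, v ∈ ℕ^n} dominates (componentwise) some 0/1 vector that is itself non-optimal, then for every feasible bounded right-hand side b the optimal values of the integer program and its LP relaxation coincide, i.e. gap(A,c) = 0. -/
/-!
The integer optimum is attained, since all costs lie in `(1/D)ℤ` for a common denominator `D`
of `c`; call it `u`. A cheaper rational feasible point `q` would make `N • u` non-optimal, as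
witnessed by the integral point `N • q`. By hypothesis `N • u` then dominates a non-optimal
0/1 point `w`, and `w ≤ u` because `u` and `N • u` have the same support. Replacing `w` inside
`u` by a cheaper point of its fibre makes `u` itself non-optimal, a contradiction. Finally, a
cheaper real feasible point `x` yields a cheaper rational one: the midpoint `m` of `x` and `u`
is still cheaper, and rational feasible points are dense in the face of the LP polyhedron that
contains `m` in its relative interior, a face which also contains the rational point `u`.
-/

open Matrix Filter Topology

variable {σ ι : Type*}

theorem natCast_tsub_add {R : Type*} [Ring R] {u w : ι → ℕ} (v : ι → ℕ) (h : w ≤ u) :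
    (fun i => (((u - w + v) i : ℕ) : R)) =
      (fun i => (u i : R)) - (fun i => (w i : R)) + fun i => (v i : R) := by
  ext i
  simp [Nat.cast_sub (h i)]

variable [Fintype ι]

theorem mem_closure_ratCast_solutions {R : Set (ι → ℚ)} {x : ι → ℝ}
    (hx : ∀ r ∈ R, ∑ i, (r i : ℝ) * x i = 0) :
    x ∈ closure ((fun q i => (q i : ℝ)) ''
      {q : ι → ℚ | ∀ r ∈ R, ∑ i, r i * q i = 0}) := by
  classical
  -- Expanding the coordinates of `x` in a `ℚ`-basis `β` of `ℝ` writes `x = φ β` with `φ` linear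
  -- over rational solutions; then move `β` to nearby rational coefficients.
  let J := Module.Basis.ofVectorSpaceIndex ℚ ℝ
  let β : Module.Basis J ℚ ℝ := Module.Basis.ofVectorSpace ℚ ℝ
  let Q := fun t i => β.repr (x i) t
  let T := Finset.univ.biUnion fun i => (β.repr (x i)).support
  let φ : (J → ℝ) → ι → ℝ := fun ρ i => ∑ t ∈ T, ρ t * Q t i
  have hQ : ∀ t, ∀ r ∈ R, ∑ i, r i * Q t i = 0 := fun t r hr => by
    simpa [Q, map_sum, ← Rat.smul_def] using congrArg (fun y => β.repr y t) (hx r hr)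
  have hφβ : φ β = x := by
    ext i
    conv_rhs => rw [← β.linearCombination_repr (x i), Finsupp.linearCombination_apply]
    rw [Finsupp.sum_of_support_subset _
      (Finset.subset_biUnion_of_mem (fun i => (β.repr (x i)).support) (Finset.mem_univ i))
      _ fun t _ => zero_smul ℚ (β t)]
    exact Finset.sum_congr rfl fun t _ => by rw [Rat.smul_def, mul_comm]
  have hφ : Continuous φ := by fun_prop
  have hdense : DenseRange (fun (ρ : J → ℚ) t => (ρ t : ℝ)) :=
    DenseRange.piMap fun _ => Rat.denseRange_cast
  refine closure_mono ?_
    (hφβ ▸ image_closure_subset_closure_image hφ ⟨β, hdense β, rfl⟩)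
  rintro _ ⟨_, ⟨ρ, rfl⟩, rfl⟩
  refine ⟨fun i => ∑ t ∈ T, ρ t * Q t i, fun r hr => ?_, by ext i; simp [φ]⟩
  simp_rw [Finset.mul_sum, mul_left_comm (r _)]
  rw [Finset.sum_comm]
  simp [← Finset.mul_sum, hQ _ r hr]

theorem mem_closure_ratCast_nonneg_solutions (A : Matrix σ ι ℚ) (p₀ : ι → ℚ)
    {x : ι → ℝ} (hx : 0 ≤ x) (hAx : A.map (↑) *ᵥ x = A.map (↑) *ᵥ (fun i => (p₀ i : ℝ)))
    (hsupp : ∀ j, x j = 0 → p₀ j = 0) :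
    x ∈ closure ((fun p i => (p i : ℝ)) '' {p : ι → ℚ | 0 ≤ p ∧ A *ᵥ p = A *ᵥ p₀}) := by
  classical
  -- Zero coordinates of `x` are kept at zero by extra equations; positivity of the others is
  -- an open condition.
  let R : Set (ι → ℚ) :=
    Set.range (fun r i => A r i) ∪ {r | ∃ j, x j = 0 ∧ r = Pi.single j 1}
  let y : ι → ℝ := x - fun i => (p₀ i : ℝ)
  have hy : ∀ r ∈ R, ∑ i, (r i : ℝ) * y i = 0 := by
    rintro _ (⟨r, rfl⟩ | ⟨j, hj, rfl⟩)
    · simpa [y, mul_sub, mulVec, dotProduct, sub_eq_zero] using congrFun hAx r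
    · simp [y, Pi.single_apply, apply_ite (Rat.cast : ℚ → ℝ), ite_mul, hj, hsupp j hj]
  have hpos : ∀ᶠ z in 𝓝 x, ∀ j, 0 < x j → 0 < z j := eventually_all.2 fun j => by
    by_cases hj : 0 < x j
    · exact ((continuous_apply j).tendsto x).eventually (lt_mem_nhds hj) |>.mono
        fun _ h _ => h
    · exact .of_forall fun _ h => absurd h hj
  have hshift : Tendsto (· + fun i => (p₀ i : ℝ)) (𝓝 y) (𝓝 x) := by
    simpa [y] using (continuous_add_const (fun i => (p₀ i : ℝ))).tendsto y
  refine mem_closure_iff_nhds.2 fun t ht => ?_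
  obtain ⟨_, ⟨hqt, hqpos⟩, q, hq, rfl⟩ :=
    mem_closure_iff_nhds.1 (mem_closure_ratCast_solutions hy) _ (hshift (inter_mem ht hpos))
  refine ⟨_, hqt, q + p₀, ⟨fun j => ?_, ?_⟩, by ext; simp⟩
  · by_cases hj : x j = 0
    · have hqj : q j = 0 := by simpa [Pi.single_apply] using hq _ (Or.inr ⟨j, hj, rfl⟩)
      simp [hqj, hsupp j hj]
    · have := hqpos j ((hx j).lt_of_ne' hj)
      simp only [Pi.add_apply] at this
      exact_mod_cast this.le
  · rw [mulVec_add, add_eq_right]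
    exact funext fun r => hq _ (Or.inl ⟨r, rfl⟩)

theorem exists_pos_nat_mul_eq_intCast (q : ι → ℚ) :
    ∃ N : ℕ, 0 < N ∧ ∀ i, ∃ k : ℤ, (N : ℚ) * q i = k := by
  refine ⟨∏ i, (q i).den, Finset.prod_pos fun i _ => (q i).pos, fun i => ?_⟩
  obtain ⟨m, hm⟩ := Finset.dvd_prod_of_mem (fun i => (q i).den) (Finset.mem_univ i)
  refine ⟨m * (q i).num, ?_⟩
  rw [hm, Nat.cast_mul, mul_comm ((q i).den : ℚ), mul_assoc, Rat.den_mul_eq_num]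
  push_cast
  ring

theorem exists_isLeast_of_forall_mul_eq_intCast {S : Set ℝ} {N : ℝ} (hN : 0 < N)
    (hS : ∀ s ∈ S, ∃ k : ℤ, N * s = k) (hne : S.Nonempty) (hbd : BddBelow S) :
    ∃ m, IsLeast S m := by
  obtain ⟨L, hL⟩ := hbd
  obtain ⟨s₀, hs₀⟩ := hne
  obtain ⟨k₀, hk₀⟩ := hS s₀ hs₀
  have hbdd : ∀ k : ℤ, (∃ s ∈ S, N * s = k) → ⌊N * L⌋ ≤ k := fun k ⟨s, hs, hsk⟩ => by
    have : (⌊N * L⌋ : ℝ) ≤ k := (Int.floor_le _).trans (hsk ▸ by gcongr; exact hL hs)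
    exact_mod_cast this
  obtain ⟨_, ⟨m, hm, hmk⟩, hmin⟩ := Int.exists_least_of_bdd ⟨_, hbdd⟩ ⟨k₀, s₀, hs₀, hk₀⟩
  refine ⟨m, hm, fun s hs => ?_⟩
  obtain ⟨k, hk⟩ := hS s hs
  have : N * m ≤ N * s := by
    rw [hmk, hk]
    exact_mod_cast hmin k ⟨s, hs, hk⟩
  exact le_of_mul_le_mul_left this hN

theorem intCast_mulVec_natCast {R : Type*} [Ring R] (A : Matrix σ ι ℤ) (u : ι → ℕ) :
    A.map (↑) *ᵥ (fun i => (u i : R)) = fun r => ((A *ᵥ fun i => (u i : ℤ)) r : R) := by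
  ext r
  simp [mulVec, dotProduct]

theorem mulVec_natCast_eq_iff (R : Type*) [Ring R] [CharZero R] (A : Matrix σ ι ℤ)
    {u v : ι → ℕ} :
    A *ᵥ (fun i => (v i : ℤ)) = A *ᵥ (fun i => (u i : ℤ)) ↔
      A.map (↑) *ᵥ (fun i => (v i : R)) = A.map (↑) *ᵥ fun i => (u i : R) := by
  simp [intCast_mulVec_natCast, funext_iff]

def cost (c : ι → ℚ) (x : ι → ℝ) : ℝ := (fun i => (c i : ℝ)) ⬝ᵥ x

theorem cost_smul (c : ι → ℚ) (a : ℝ) (x : ι → ℝ) : cost c (a • x) = a * cost c x :=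
  dotProduct_smul a _ x

theorem cost_add (c : ι → ℚ) (x y : ι → ℝ) : cost c (x + y) = cost c x + cost c y :=
  dotProduct_add _ x y

theorem continuous_cost (c : ι → ℚ) : Continuous (cost c) := by
  unfold cost dotProduct
  fun_prop

def IsNonOptimal (A : Matrix σ ι ℤ) (c : ι → ℚ) (u : ι → ℕ) : Prop :=
  ∃ v : ι → ℕ, A *ᵥ (fun i => (v i : ℤ)) = A *ᵥ (fun i => (u i : ℤ)) ∧
    cost c (fun i => v i) < cost c (fun i => u i)

-- The monomial ideal `M(A,c)` spanned by the non-optimal points is generated by squarefree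
-- monomials.
def NonOptimalIdealSquarefree (A : Matrix σ ι ℤ) (c : ι → ℚ) : Prop :=
  ∀ u, IsNonOptimal A c u →
    ∃ w : ι → ℕ, (∀ i, w i ≤ 1) ∧ (∀ i, w i ≤ u i) ∧ IsNonOptimal A c w

def ipValues (A : Matrix σ ι ℤ) (c : ι → ℚ) (b : σ → ℤ) : Set ℝ :=
  {x | ∃ u : ι → ℕ, A *ᵥ (fun i => (u i : ℤ)) = b ∧ x = cost c (fun i => u i)}

def lpValues (A : Matrix σ ι ℤ) (c : ι → ℚ) (b : σ → ℤ) : Set ℝ :=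
  {x | ∃ v : ι → ℝ, (∀ i, 0 ≤ v i) ∧ A.map (↑) *ᵥ v = (fun i => (b i : ℝ)) ∧ x = cost c v}

variable {A : Matrix σ ι ℤ} {c : ι → ℚ}

theorem exists_isLeast_ipValues {b : σ → ℤ} (hne : (ipValues A c b).Nonempty)
    (hbd : BddBelow (ipValues A c b)) :
    ∃ u : ι → ℕ, A *ᵥ (fun i => (u i : ℤ)) = b ∧
      IsLeast (ipValues A c b) (cost c fun i => u i) := by
  obtain ⟨N, hN, hk⟩ := exists_pos_nat_mul_eq_intCast c
  choose k hk using hk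
  have hint : ∀ s ∈ ipValues A c b, ∃ z : ℤ, (N : ℝ) * s = z := by
    rintro s ⟨u, -, rfl⟩
    refine ⟨∑ i, k i * u i, ?_⟩
    rw [cost, dotProduct, Finset.mul_sum]
    push_cast
    refine Finset.sum_congr rfl fun i _ => ?_
    rw [← mul_assoc]
    exact_mod_cast congrArg (· * (u i : ℚ)) (hk i)
  obtain ⟨_, ⟨u, hAu, rfl⟩, hmin⟩ :=
    exists_isLeast_of_forall_mul_eq_intCast (by exact_mod_cast hN) hint hne hbd
  exact ⟨u, hAu, ⟨u, hAu, rfl⟩, hmin⟩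

theorem IsNonOptimal.mono {u w : ι → ℕ} (hw : IsNonOptimal A c w) (hwu : w ≤ u) :
    IsNonOptimal A c u := by
  obtain ⟨v, hAv, hcv⟩ := hw
  refine ⟨u - w + v, ?_, ?_⟩
  · rw [natCast_tsub_add v hwu, mulVec_add, mulVec_sub, hAv, sub_add_cancel]
  · simp only [cost, natCast_tsub_add v hwu, dotProduct_add, dotProduct_sub] at hcv ⊢
    linarith

namespace NonOptimalIdealSquarefree

variable (h : NonOptimalIdealSquarefree A c) {u : ι → ℕ} (hu : ¬IsNonOptimal A c u)
include h hu

theorem not_isNonOptimal_of_support_subset {u' : ι → ℕ} (hsupp : ∀ i, u i = 0 → u' i = 0) :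
    ¬IsNonOptimal A c u' := fun hu' => by
  obtain ⟨w, hw1, hwu', hw⟩ := h u' hu'
  refine hu (hw.mono fun i => ?_)
  by_cases hi : u i = 0
  · exact (hwu' i).trans (hsupp i hi).le |>.trans (Nat.zero_le _)
  · exact (hw1 i).trans (Nat.one_le_iff_ne_zero.2 hi)

theorem cost_le_of_rat {q : ι → ℚ} (hq : 0 ≤ q)
    (hAq : A.map (↑) *ᵥ q = A.map (↑) *ᵥ fun i => (u i : ℚ)) :
    cost c (fun i => u i) ≤ cost c fun i => q i := by
  obtain ⟨N, hN, hk⟩ := exists_pos_nat_mul_eq_intCast q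
  choose k hk using hk
  have hv : (fun i => ((k i).toNat : ℚ)) = (N : ℚ) • q := funext fun i => by
    have : (0 : ℚ) ≤ k i := by rw [← hk i]; exact mul_nonneg (Nat.cast_nonneg N) (hq i)
    rw [Pi.smul_apply, smul_eq_mul, hk i]
    exact_mod_cast Int.toNat_of_nonneg (by exact_mod_cast this)
  have hvR : (fun i => ((k i).toNat : ℝ)) = (N : ℝ) • fun i => (q i : ℝ) :=
    funext fun i => by simpa using congrArg (Rat.cast : ℚ → ℝ) (congrFun hv i)
  have hNu (R : Type) [Semiring R] :
      (fun i => (((N • u) i : ℕ) : R)) = (N : R) • fun i => (u i : R) := by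
    ext i
    simp
  by_contra! hlt
  refine not_isNonOptimal_of_support_subset h hu (u' := N • u) (fun i hi => by simp [hi])
    ⟨fun i => (k i).toNat, (mulVec_natCast_eq_iff ℚ A).2 ?_, ?_⟩
  · rw [hv, hNu, mulVec_smul, mulVec_smul, hAq]
  · rw [hvR, hNu, cost_smul, cost_smul]
    exact mul_lt_mul_of_pos_left hlt (by exact_mod_cast hN)

theorem cost_le_of_real {x : ι → ℝ} (hx : ∀ i, 0 ≤ x i)
    (hAx : A.map (↑) *ᵥ x = A.map (↑) *ᵥ fun i => (u i : ℝ)) :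
    cost c (fun i => u i) ≤ cost c x := by
  by_contra! hlt
  let A' : Matrix σ ι ℚ := A.map (↑)
  have hA' : A'.map (↑) = A.map (Int.cast : ℤ → ℝ) := by ext; simp [A']
  -- unlike `x`, the midpoint vanishes only where `u` does
  let w : ι → ℝ := (1 / 2 : ℝ) • (x + fun i => (u i : ℝ))
  have hw : 0 ≤ w := fun i => by
    have := hx i
    simp only [w, Pi.smul_apply, Pi.add_apply, smul_eq_mul]
    positivity
  have hAw : A'.map (↑) *ᵥ w = A'.map (↑) *ᵥ fun i => ((u i : ℚ) : ℝ) := by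
    simp only [hA', Rat.cast_natCast, w, mulVec_smul, mulVec_add, hAx]
    module
  have hsupp : ∀ j, w j = 0 → (u j : ℚ) = 0 := fun j hj => by
    have : (u j : ℝ) = 0 := by
      simp only [w, Pi.smul_apply, Pi.add_apply, smul_eq_mul] at hj
      linarith [hx j, (u j).cast_nonneg (α := ℝ)]
    exact_mod_cast this
  have hcw : cost c w < cost c fun i => u i := by
    simp only [w, cost_smul, cost_add]
    linarith
  obtain ⟨_, hpw, p, ⟨hp, hAp⟩, rfl⟩ := mem_closure_iff_nhds.1
    (mem_closure_ratCast_nonneg_solutions A' _ hw hAw hsupp) _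
    ((continuous_cost c).continuousAt.eventually (gt_mem_nhds hcw))
  exact (cost_le_of_rat h hu hp hAp).not_gt hpw

theorem isLeast_lpValues :
    IsLeast (lpValues A c (A *ᵥ fun i => (u i : ℤ))) (cost c fun i => u i) := by
  have hAu := intCast_mulVec_natCast (R := ℝ) A u
  refine ⟨⟨_, fun i => (u i).cast_nonneg, hAu, rfl⟩, ?_⟩
  rintro _ ⟨x, hx, hAx, rfl⟩
  exact cost_le_of_real h hu hx (hAx.trans hAu.symm)

end NonOptimalIdealSquarefree

theorem stmt11_general (d n : ℕ) (A : Matrix (Fin d) (Fin n) ℤ) (c : Fin n → ℚ)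
    (hsf : ∀ u : Fin n → ℕ,
      (∃ v : Fin n → ℕ, A.mulVec (fun i => (v i : ℤ)) = A.mulVec (fun i => (u i : ℤ)) ∧
        ∑ i, (c i : ℝ) * (v i : ℝ) < ∑ i, (c i : ℝ) * (u i : ℝ)) →
      ∃ w : Fin n → ℕ, (∀ i, w i ≤ 1) ∧ (∀ i, w i ≤ u i) ∧
        ∃ v : Fin n → ℕ, A.mulVec (fun i => (v i : ℤ)) = A.mulVec (fun i => (w i : ℤ)) ∧
          ∑ i, (c i : ℝ) * (v i : ℝ) < ∑ i, (c i : ℝ) * (w i : ℝ)) :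
    ∀ b : Fin d → ℤ,
      {x : ℝ | ∃ u : Fin n → ℕ, A.mulVec (fun i => (u i : ℤ)) = b ∧
          x = ∑ i, (c i : ℝ) * (u i : ℝ)}.Nonempty →
      BddBelow {x : ℝ | ∃ u : Fin n → ℕ, A.mulVec (fun i => (u i : ℤ)) = b ∧
          x = ∑ i, (c i : ℝ) * (u i : ℝ)} →
      sInf {x : ℝ | ∃ u : Fin n → ℕ, A.mulVec (fun i => (u i : ℤ)) = b ∧
          x = ∑ i, (c i : ℝ) * (u i : ℝ)} =
      sInf {x : ℝ | ∃ v : Fin n → ℝ, (∀ i, 0 ≤ v i) ∧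
          (A.map (Int.cast : ℤ → ℝ)).mulVec v = (fun i => (b i : ℝ)) ∧
          x = ∑ i, (c i : ℝ) * v i} := by
  intro b hne hbd
  obtain ⟨u, rfl, hu⟩ := exists_isLeast_ipValues (A := A) (c := c) hne hbd
  have hopt : ¬IsNonOptimal A c u := fun ⟨v, hAv, hcv⟩ => (hu.2 ⟨v, hAv, rfl⟩).not_gt hcv
  exact hu.csInf_eq.trans (NonOptimalIdealSquarefree.isLeast_lpValues hsf hopt).csInf_eq.symm

/-- If `ker(A) ∩ ℕ^n = {0}` and every non-optimal point of the family of
integer programs `min{c·v : Av = Au, v ∈ ℕ^n}` dominates componentwise a 0/1 vector which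
is itself non-optimal (i.e. `M(A,c)` is squarefree), then for every feasible bounded
right-hand side `b` the IP and LP optimal values coincide: `gap(A,c) = 0`. -/
theorem stmt11 (d n : ℕ) (A : Matrix (Fin d) (Fin n) ℤ) (c : Fin n → ℚ)
    (hker : ∀ x : Fin n → ℤ, A.mulVec x = 0 → (∀ i, 0 ≤ x i) → x = 0)
    (hsf : ∀ u : Fin n → ℕ,
      (∃ v : Fin n → ℕ, A.mulVec (fun i => (v i : ℤ)) = A.mulVec (fun i => (u i : ℤ)) ∧
        ∑ i, (c i : ℝ) * (v i : ℝ) < ∑ i, (c i : ℝ) * (u i : ℝ)) →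
      ∃ w : Fin n → ℕ, (∀ i, w i ≤ 1) ∧ (∀ i, w i ≤ u i) ∧
        ∃ v : Fin n → ℕ, A.mulVec (fun i => (v i : ℤ)) = A.mulVec (fun i => (w i : ℤ)) ∧
          ∑ i, (c i : ℝ) * (v i : ℝ) < ∑ i, (c i : ℝ) * (w i : ℝ)) :
    ∀ b : Fin d → ℤ,
      {x : ℝ | ∃ u : Fin n → ℕ, A.mulVec (fun i => (u i : ℤ)) = b ∧
          x = ∑ i, (c i : ℝ) * (u i : ℝ)}.Nonempty →
      BddBelow {x : ℝ | ∃ u : Fin n → ℕ, A.mulVec (fun i => (u i : ℤ)) = b ∧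
          x = ∑ i, (c i : ℝ) * (u i : ℝ)} →
      sInf {x : ℝ | ∃ u : Fin n → ℕ, A.mulVec (fun i => (u i : ℤ)) = b ∧
          x = ∑ i, (c i : ℝ) * (u i : ℝ)} =
      sInf {x : ℝ | ∃ v : Fin n → ℝ, (∀ i, 0 ≤ v i) ∧
          (A.map (Int.cast : ℤ → ℝ)).mulVec v = (fun i => (b i : ℝ)) ∧
          x = ∑ i, (c i : ℝ) * v i} :=
  stmt11_general d n A c hsf
end

section
/- Let L ⊆ ℤ^n be a lattice with L ∩ ℕ^n = {0}, c ∈ ℚ^n, and suppose the lattice program with datum z ∈ ℕ^n has optimal solution x* = u + x' where x'_i = 0 for all i ∈ τ (τ ⊆ {1,…,n}). If y* is an optimal solution of the real relaxation min{c·y : y ≡ z mod L⊗ℝ, y ≥ 0}, then y* − x' is a feasible solution of the auxiliary program maximize Σ_{i∈τ} u_i c_i − c·v subject to v ≡ u mod L⊗ℝ, v_i ≥ 0 for i ∈ τ, and its objective value there equals c·x* − c·y*. Hence the gap attained at z is at most the optimal value of the auxiliary program for (u,τ). -/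
/-- First half of Lemma 2.5. If the lattice program at `z` has optimal
solution `x* = u + x'` with `x'_i = 0` for `i ∈ τ`, and `y*` is optimal for the real
relaxation, then `y* − x'` is feasible for the auxiliary program for `(u,τ)` with
objective value `c·x* − c·y*`; hence the gap attained at `z` is at most the optimal
value of the auxiliary program. -/
theorem stmt14 (n : ℕ) (L : Submodule ℤ (Fin n → ℤ))
    (hL : ∀ x ∈ L, (∀ i, 0 ≤ x i) → x = 0)
    (c : Fin n → ℚ) (z u x' xstar : Fin n → ℕ) (τ : Finset (Fin n))
    (hx' : ∀ i ∈ τ, x' i = 0) (hu : ∀ j ∉ τ, u j = 0)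
    (hxstar : xstar = u + x')
    (LR : Submodule ℝ (Fin n → ℝ))
    (hLR : LR = Submodule.span ℝ
      ((fun (w : Fin n → ℤ) => fun i => (w i : ℝ)) '' (L : Set (Fin n → ℤ))))
    (hfeas : (fun i => (xstar i : ℤ) - (z i : ℤ)) ∈ L)
    (hopt : ∀ v : Fin n → ℕ, (fun i => (v i : ℤ) - (z i : ℤ)) ∈ L →
        ∑ i, (c i : ℝ) * (xstar i : ℝ) ≤ ∑ i, (c i : ℝ) * (v i : ℝ))
    (ystar : Fin n → ℝ)
    (hyfeas : (∀ i, 0 ≤ ystar i) ∧ (fun i => ystar i - (z i : ℝ)) ∈ LR)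
    (hyopt : ∀ y : Fin n → ℝ, (∀ i, 0 ≤ y i) → (fun i => y i - (z i : ℝ)) ∈ LR →
        ∑ i, (c i : ℝ) * ystar i ≤ ∑ i, (c i : ℝ) * y i) :
    ((fun i => (ystar i - (x' i : ℝ)) - (u i : ℝ)) ∈ LR ∧
      (∀ i ∈ τ, 0 ≤ ystar i - (x' i : ℝ))) ∧
    ((∑ i ∈ τ, (u i : ℝ) * (c i : ℝ)) - ∑ i, (c i : ℝ) * (ystar i - (x' i : ℝ)) =
      ∑ i, (c i : ℝ) * (xstar i : ℝ) - ∑ i, (c i : ℝ) * ystar i) ∧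
    (∀ M : ℝ, IsLUB {x : ℝ | ∃ v : Fin n → ℝ, (fun i => v i - (u i : ℝ)) ∈ LR ∧
        (∀ i ∈ τ, 0 ≤ v i) ∧
        x = (∑ i ∈ τ, (u i : ℝ) * (c i : ℝ)) - ∑ i, (c i : ℝ) * v i} M →
      ∑ i, (c i : ℝ) * (xstar i : ℝ) - ∑ i, (c i : ℝ) * ystar i ≤ M) := by
  obtain ⟨hy0, hyz⟩ := hyfeas
  have hxL : (fun i => (xstar i : ℝ) - (z i : ℝ)) ∈ LR := by
    rw [hLR]
    apply Submodule.subset_span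
    refine ⟨fun i => (xstar i : ℤ) - (z i : ℤ), hfeas, ?_⟩
    funext i; push_cast; ring
  have hmem : (fun i => (ystar i - (x' i : ℝ)) - (u i : ℝ)) ∈ LR := by
    have h := Submodule.sub_mem LR hyz hxL
    convert h using 1
    funext i
    have hxi : xstar i = u i + x' i := by rw [hxstar]; rfl
    simp only [Pi.sub_apply, hxi]
    push_cast; ring
  have hpos : ∀ i ∈ τ, 0 ≤ ystar i - (x' i : ℝ) := by
    intro i hi; rw [hx' i hi]; simpa using hy0 i
  have hsum : (∑ i ∈ τ, (u i : ℝ) * (c i : ℝ)) = ∑ i, (c i : ℝ) * (u i : ℝ) := by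
    rw [Finset.sum_subset (Finset.subset_univ τ)]
    · exact Finset.sum_congr rfl (fun i _ => mul_comm _ _)
    · intro i _ hi; rw [hu i hi]; simp
  have hval : (∑ i ∈ τ, (u i : ℝ) * (c i : ℝ)) - ∑ i, (c i : ℝ) * (ystar i - (x' i : ℝ)) =
      ∑ i, (c i : ℝ) * (xstar i : ℝ) - ∑ i, (c i : ℝ) * ystar i := by
    rw [hsum]
    have hxi : ∀ i, (xstar i : ℝ) = (u i : ℝ) + (x' i : ℝ) := by
      intro i; rw [hxstar, Pi.add_apply]; push_cast; ring
    simp_rw [hxi, mul_sub, mul_add, Finset.sum_sub_distrib, Finset.sum_add_distrib]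
    ring
  refine ⟨⟨hmem, hpos⟩, hval, ?_⟩
  intro M hM
  rw [← hval]
  exact hM.1 ⟨fun i => ystar i - (x' i : ℝ), hmem, hpos, rfl⟩
end

section
/- Let L ⊆ ℤ^n be a lattice, c ∈ ℚ^n, u ∈ ℕ^n with u_j = 0 for j ∉ τ, and let v* be an optimal solution of the program maximize Σ_{i∈τ} u_i c_i − c·v subject to v − u ∈ L⊗ℝ and v_i ≥ 0 for i ∈ τ. Define v' ∈ ℕ^n by v'_i = max{0, −⌊v*_i⌋}. Then z := u + v' ∈ ℕ^n and v* + v' is a feasible solution of the real relaxation min{c·w : w − z ∈ L⊗ℝ, w ≥ 0}; consequently the difference between c·z and the relaxation's optimal value is at least c·u − c·v*. -/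
/-- Second half of Lemma 2.5. If `v*` is optimal for the auxiliary program
for `(u,τ)` and `v'_i = max{0, −⌊v*_i⌋}`, then `z = u + v' ∈ ℕ^n`, `v* + v'` is feasible
for the real relaxation at `z`, and the difference between `c·z` and the relaxation's
optimal value is at least `c·u − c·v*`. -/
theorem stmt15 (n : ℕ) (L : Submodule ℤ (Fin n → ℤ)) (c : Fin n → ℚ)
    (u : Fin n → ℕ) (τ : Finset (Fin n)) (hu : ∀ j ∉ τ, u j = 0)
    (LR : Submodule ℝ (Fin n → ℝ))
    (hLR : LR = Submodule.span ℝ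
      ((fun (w : Fin n → ℤ) => fun i => (w i : ℝ)) '' (L : Set (Fin n → ℤ))))
    (vstar : Fin n → ℝ)
    (hvfeas : (fun i => vstar i - (u i : ℝ)) ∈ LR ∧ ∀ i ∈ τ, 0 ≤ vstar i)
    (hvopt : ∀ v : Fin n → ℝ, (fun i => v i - (u i : ℝ)) ∈ LR → (∀ i ∈ τ, 0 ≤ v i) →
        ∑ i, (c i : ℝ) * vstar i ≤ ∑ i, (c i : ℝ) * v i)
    (v' : Fin n → ℕ) (hv' : ∀ i, (v' i : ℤ) = max 0 (-⌊vstar i⌋)) :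
    (∀ i, 0 ≤ vstar i + (v' i : ℝ)) ∧
    ((fun i => (vstar i + (v' i : ℝ)) - ((u i + v' i : ℕ) : ℝ)) ∈ LR) ∧
    (∀ mval : ℝ, IsGLB {x : ℝ | ∃ w : Fin n → ℝ, (∀ i, 0 ≤ w i) ∧
        (fun i => w i - ((u i + v' i : ℕ) : ℝ)) ∈ LR ∧ x = ∑ i, (c i : ℝ) * w i} mval →
      ∑ i, (c i : ℝ) * (u i : ℝ) - ∑ i, (c i : ℝ) * vstar i ≤
        ∑ i, (c i : ℝ) * ((u i + v' i : ℕ) : ℝ) - mval) := by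
  have h1 : ∀ i, 0 ≤ vstar i + (v' i : ℝ) := by
    intro i
    have h2 : (-⌊vstar i⌋ : ℤ) ≤ (v' i : ℤ) := (hv' i) ▸ le_max_right _ _
    have h3 : (-(⌊vstar i⌋ : ℝ)) ≤ (v' i : ℝ) := by exact_mod_cast h2
    have h4 := Int.floor_le (vstar i)
    linarith
  have hfeas : (fun i => (vstar i + (v' i : ℝ)) - ((u i + v' i : ℕ) : ℝ)) ∈ LR := by
    have heq : (fun i => (vstar i + (v' i : ℝ)) - ((u i + v' i : ℕ) : ℝ))
        = fun i => vstar i - (u i : ℝ) := by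
      funext i; push_cast; ring
    rw [heq]; exact hvfeas.1
  refine ⟨h1, hfeas, ?_⟩
  intro mval hglb
  have hmem : (∑ i, (c i : ℝ) * (vstar i + (v' i : ℝ))) ∈
      {x : ℝ | ∃ w : Fin n → ℝ, (∀ i, 0 ≤ w i) ∧
        (fun i => w i - ((u i + v' i : ℕ) : ℝ)) ∈ LR ∧ x = ∑ i, (c i : ℝ) * w i} :=
    ⟨fun i => vstar i + (v' i : ℝ), h1, hfeas, rfl⟩
  have hle : mval ≤ ∑ i, (c i : ℝ) * (vstar i + (v' i : ℝ)) := hglb.1 hmem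
  have e1 : ∑ i, (c i : ℝ) * ((u i + v' i : ℕ) : ℝ)
      = ∑ i, (c i : ℝ) * (u i : ℝ) + ∑ i, (c i : ℝ) * (v' i : ℝ) := by
    rw [← Finset.sum_add_distrib]
    apply Finset.sum_congr rfl
    intro i _; push_cast; ring
  have e2 : ∑ i, (c i : ℝ) * (vstar i + (v' i : ℝ))
      = ∑ i, (c i : ℝ) * vstar i + ∑ i, (c i : ℝ) * (v' i : ℝ) := by
    rw [← Finset.sum_add_distrib]
    apply Finset.sum_congr rfl
    intro i _; ring
  linarith
end
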